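/- For integers 0 ≤ a, b < q, the code on the hyperbolic quadric obtained by evaluating the space F₁(a) ⊗ F₁(b) of bihomogeneous forms of bidegree (a,b) at all F_q-points of P¹ × P¹ has parameters [(q+1)², (a+1)(b+1), (q−a+1)(q−b+1)]. -/

import Mathlib

/-!
A nonzero binary form of degree `n` over `F_q` vanishes at no more than `n` of the `q + 1` points
of `P¹`: away from `(0 : 1)` its zeros are the roots of its dehomogenization, and a zero at
`(0 : 1)` lowers the degree of that polynomial by one. A nonzero form of bidegree `(a, b)` is
a form of degree `b` in the second point whose coefficients are forms of degree `a` in the first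
one; some coefficient is a nonzero form, so at least `q + 1 - a` rows are nonzero forms of degree
`b`, each with at least `q + 1 - b` nonzero values. Equality holds for a product `f(x) g(y)` of
forms with `a` and `b` distinct rational roots, and the weight bound makes evaluation injective.
-/

open Polynomial Finset

section Hamming

variable {α β M : Type*} [Fintype α] [Fintype β] [DecidableEq M]

lemma card_filter_option (P : Option α → Prop) [DecidablePred P] :
    #{o | P o} = (if P none then 1 else 0) + #{a | P (some a)} := by
  simp only [card_filter, Fintype.sum_option]

lemma hammingNorm_eq_sum_hammingNorm_curry [Zero M] (f : α × β → M) :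
    hammingNorm f = ∑ x, hammingNorm fun y => f (x, y) := by
  simp only [hammingNorm, card_filter, Fintype.sum_prod_type]

lemma card_mul_le_hammingNorm [Zero M] (f : α × β → M) (S : Finset α) {m : ℕ}
    (hS : ∀ x ∈ S, m ≤ hammingNorm fun y => f (x, y)) : #S * m ≤ hammingNorm f := by
  rw [hammingNorm_eq_sum_hammingNorm_curry]
  calc #S * m = ∑ _x ∈ S, m := by rw [sum_const, smul_eq_mul]
    _ ≤ ∑ x ∈ S, hammingNorm fun y => f (x, y) := sum_le_sum hS
    _ ≤ _ := sum_le_sum_of_subset (subset_univ S)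

lemma hammingNorm_mul_fst_snd [MulZeroClass M] [NoZeroDivisors M] (f : α → M) (g : β → M) :
    hammingNorm (fun p : α × β => f p.1 * g p.2) = hammingNorm f * hammingNorm g := by
  simp only [hammingNorm, ← card_product]
  congr 1
  ext p
  simp

end Hamming

def homogCoords {R : Type*} [Zero R] [One R] (o : Option R) : R × R :=
  o.elim (0, 1) fun t => (1, t)

section BinaryForm

variable {F : Type} [Field F] {n : ℕ}

def evalBinaryForm (n : ℕ) (d : Fin (n + 1) → F) (o : Option F) : F :=
  ∑ i : Fin (n + 1), d i * ((homogCoords o).1 ^ (i : ℕ) * (homogCoords o).2 ^ (n - i))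

noncomputable def dehomogenize (n : ℕ) (d : Fin (n + 1) → F) : F[X] :=
  ∑ i : Fin (n + 1), C (d i) * X ^ (n - i)

/-- `(0 : 1)` sees the coefficient of `y ^ n`, i.e. the coefficient of degree `n` of the
dehomogenization. -/
def evalHomogenized (n : ℕ) (P : F[X]) (o : Option F) : F :=
  o.elim (P.coeff n) fun t => P.eval t

lemma coeff_dehomogenize_sub (d : Fin (n + 1) → F) (k : Fin (n + 1)) :
    (dehomogenize n d).coeff (n - k) = d k := by
  rw [dehomogenize, finsetSum_coeff, sum_eq_single k]
  · simp
  · intro i _ hik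
    rw [coeff_C_mul, coeff_X_pow, if_neg, mul_zero]
    omega
  · simp

lemma natDegree_dehomogenize_le (d : Fin (n + 1) → F) : (dehomogenize n d).natDegree ≤ n :=
  natDegree_sum_le_of_forall_le _ _ fun i _ =>
    (natDegree_C_mul_le _ _).trans (by simp)

lemma dehomogenize_ne_zero {d : Fin (n + 1) → F} (hd : d ≠ 0) : dehomogenize n d ≠ 0 := by
  contrapose! hd
  funext k
  rw [← coeff_dehomogenize_sub d k, hd, coeff_zero, Pi.zero_apply]

lemma dehomogenize_coeff_sub {P : F[X]} (hP : P.natDegree ≤ n) :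
    dehomogenize n (fun i => P.coeff (n - i)) = P := by
  ext k
  obtain hk | hk := le_or_gt k n
  · obtain ⟨i, rfl⟩ : ∃ i : Fin (n + 1), k = n - i := ⟨⟨n - k, by omega⟩, by simp; omega⟩
    exact coeff_dehomogenize_sub _ i
  · rw [coeff_eq_zero_of_natDegree_lt (hP.trans_lt hk),
      coeff_eq_zero_of_natDegree_lt ((natDegree_dehomogenize_le _).trans_lt hk)]

lemma evalBinaryForm_eq_evalHomogenized (d : Fin (n + 1) → F) :
    evalBinaryForm n d = evalHomogenized n (dehomogenize n d) := by
  funext o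
  cases o with
  | none =>
    have := coeff_dehomogenize_sub d 0
    simp only [Fin.coe_ofNat_eq_mod, Nat.zero_mod, Nat.sub_zero] at this
    simp [evalBinaryForm, evalHomogenized, homogCoords, Fin.sum_univ_succ, this]
  | some t => simp [evalBinaryForm, evalHomogenized, homogCoords, dehomogenize, eval_finsetSum]

end BinaryForm

section Finite

variable {F : Type} [Field F] [Fintype F] [DecidableEq F] {n : ℕ}

lemma card_filter_evalHomogenized_eq_zero_le {P : F[X]} (hP : P ≠ 0)
    (hn : P.natDegree ≤ n) :
    #{o | evalHomogenized n P o = 0} ≤ n := by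
  have hroots : #{t | P.eval t = 0} ≤ P.natDegree :=
    card_le_degree_of_subset_roots fun t ht => by simpa [mem_roots hP] using ht
  have hsplit : #{o | evalHomogenized n P o = 0} =
      (if P.coeff n = 0 then 1 else 0) + #{t | P.eval t = 0} :=
    card_filter_option _
  split_ifs at hsplit with hcoeff
  · have : P.natDegree ≠ n := fun h => hP (leadingCoeff_eq_zero.mp (by rwa [leadingCoeff, h]))
    omega
  · omega

lemma card_sub_le_hammingNorm_evalHomogenized {P : F[X]} (hP : P ≠ 0)
    (hn : P.natDegree ≤ n) :
    Fintype.card F + 1 - n ≤ hammingNorm (evalHomogenized n P) := by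
  have hsplit := card_filter_add_card_filter_not (s := univ) (fun o => evalHomogenized n P o = 0)
  have := card_filter_evalHomogenized_eq_zero_le hP hn
  rw [card_univ, Fintype.card_option] at hsplit
  rw [hammingNorm]
  simp only [ne_eq]
  omega

lemma card_sub_le_hammingNorm_evalBinaryForm {d : Fin (n + 1) → F} (hd : d ≠ 0) :
    Fintype.card F + 1 - n ≤ hammingNorm (evalBinaryForm n d) := by
  rw [evalBinaryForm_eq_evalHomogenized]
  exact card_sub_le_hammingNorm_evalHomogenized (dehomogenize_ne_zero hd)
    (natDegree_dehomogenize_le d)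

lemma hammingNorm_evalHomogenized_prod_X_sub_C (A : Finset F) :
    hammingNorm (evalHomogenized #A (∏ x ∈ A, (X - C x))) = Fintype.card F + 1 - #A := by
  set P := ∏ x ∈ A, (X - C x)
  have hmonic : P.Monic := monic_prod_of_monic _ _ fun x _ => monic_X_sub_C x
  have hdeg : P.natDegree = #A := natDegree_finsetProd_X_sub_C_eq_card A fun x => x
  have hzeros : ({t | P.eval t ≠ 0} : Finset F) = Aᶜ := by
    ext t
    have hroots : t ∈ P.roots ↔ t ∈ A := by rw [roots_prod_X_sub_C, mem_val]
    rw [mem_roots hmonic.ne_zero, IsRoot.def] at hroots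
    simp [hroots]
  have hsplit : hammingNorm (evalHomogenized #A P) =
      (if P.coeff #A ≠ 0 then 1 else 0) + #{t | P.eval t ≠ 0} :=
    card_filter_option _
  rw [hsplit, hzeros, card_compl, ← hdeg, hmonic.coeff_natDegree, if_pos one_ne_zero, hdeg]
  have := card_le_univ A
  omega

lemma exists_hammingNorm_evalBinaryForm_eq (hn : n ≤ Fintype.card F) :
    ∃ d : Fin (n + 1) → F, hammingNorm (evalBinaryForm n d) = Fintype.card F + 1 - n := by
  obtain ⟨A, -, rfl⟩ := exists_subset_card_eq (s := (univ : Finset F)) (by simpa using hn)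
  refine ⟨fun i => (∏ x ∈ A, (X - C x)).coeff (#A - i), ?_⟩
  rw [evalBinaryForm_eq_evalHomogenized,
    dehomogenize_coeff_sub (natDegree_finsetProd_X_sub_C_eq_card A _).le,
    hammingNorm_evalHomogenized_prod_X_sub_C]

end Finite

section Biform

variable {F : Type} [Field F] {a b : ℕ}

def evalBiform (a b : ℕ) : (Fin (a + 1) × Fin (b + 1) → F) →ₗ[F] (Option F × Option F → F) where
  toFun c p := ∑ i : Fin (a + 1), ∑ j : Fin (b + 1), c (i, j) *
    ((homogCoords p.1).1 ^ (i : ℕ) * (homogCoords p.1).2 ^ (a - i) *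
      (homogCoords p.2).1 ^ (j : ℕ) * (homogCoords p.2).2 ^ (b - j))
  map_add' c c' := by
    funext p
    simp [add_mul, sum_add_distrib]
  map_smul' r c := by
    funext p
    simp [mul_sum, mul_assoc]

lemma evalBiform_apply (c : Fin (a + 1) × Fin (b + 1) → F) (p : Option F × Option F) :
    evalBiform a b c p =
      evalBinaryForm b (fun j => evalBinaryForm a (fun i => c (i, j)) p.1) p.2 := by
  simp only [evalBiform, LinearMap.coe_mk, AddHom.coe_mk, evalBinaryForm, sum_mul]
  rw [sum_comm]
  exact sum_congr rfl fun j _ => sum_congr rfl fun i _ => by ring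

lemma evalBiform_mul (d : Fin (a + 1) → F) (e : Fin (b + 1) → F) :
    evalBiform a b (fun ij => d ij.1 * e ij.2) =
      fun p => evalBinaryForm a d p.1 * evalBinaryForm b e p.2 := by
  funext p
  simp only [evalBiform_apply, evalBinaryForm, sum_mul, mul_sum]
  exact sum_congr rfl fun i _ => sum_congr rfl fun j _ => by ring

variable [Fintype F] [DecidableEq F]

lemma card_sub_mul_card_sub_le_hammingNorm_evalBiform {c : Fin (a + 1) × Fin (b + 1) → F}
    (hc : c ≠ 0) :
    (Fintype.card F + 1 - a) * (Fintype.card F + 1 - b) ≤ hammingNorm (evalBiform a b c) := by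
  set rows : Option F → Fin (b + 1) → F := fun x j => evalBinaryForm a (fun i => c (i, j)) x
  obtain ⟨j₀, hj₀⟩ : ∃ j₀, (fun i => c (i, j₀)) ≠ 0 := by
    contrapose! hc
    funext ij
    exact congrFun (hc ij.2) ij.1
  have hrows : Fintype.card F + 1 - a ≤ #{x | rows x ≠ 0} :=
    (card_sub_le_hammingNorm_evalBinaryForm hj₀).trans <| card_le_card fun x hx => by
      simp only [mem_filter, mem_univ, true_and] at hx ⊢
      exact fun h => hx (congrFun h j₀)
  calc _ ≤ #{x | rows x ≠ 0} * (Fintype.card F + 1 - b) := Nat.mul_le_mul_right _ hrows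
    _ ≤ hammingNorm (evalBiform a b c) := card_mul_le_hammingNorm _ _ fun x hx => by
        simp only [evalBiform_apply]
        exact card_sub_le_hammingNorm_evalBinaryForm (mem_filter.mp hx).2

lemma exists_hammingNorm_evalBiform_eq (ha : a ≤ Fintype.card F) (hb : b ≤ Fintype.card F) :
    ∃ c : Fin (a + 1) × Fin (b + 1) → F,
      hammingNorm (evalBiform a b c) = (Fintype.card F + 1 - a) * (Fintype.card F + 1 - b) := by
  obtain ⟨d, hd⟩ := exists_hammingNorm_evalBinaryForm_eq ha
  obtain ⟨e, he⟩ := exists_hammingNorm_evalBinaryForm_eq hb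
  exact ⟨_, by rw [evalBiform_mul, hammingNorm_mul_fst_snd, hd, he]⟩

lemma evalBiform_injective (ha : a ≤ Fintype.card F) (hb : b ≤ Fintype.card F) :
    Function.Injective (evalBiform (F := F) a b) := by
  refine (injective_iff_map_eq_zero _).mpr fun c hc => ?_
  by_contra h
  have := card_sub_mul_card_sub_le_hammingNorm_evalBiform h
  rw [hc, hammingNorm_zero, Nat.le_zero, Nat.mul_eq_zero] at this
  omega

end Biform

/-- For `0 ≤ a, b < q`, the code on the hyperbolic quadric obtained by evaluating
bihomogeneous forms of bidegree `(a,b)` at the `(q+1)²` rational points of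
`P¹ × P¹` has parameters `[(q+1)², (a+1)(b+1), (q-a+1)(q-b+1)]`. -/
theorem stmt_5 (F : Type) [Field F] [Fintype F] [DecidableEq F] (q a b : ℕ)
    (hq : Fintype.card F = q) (ha : a < q) (hb : b < q) :
    let pt : Option F → F × F := fun o => o.elim (0, 1) fun t => (1, t)
    let C : Submodule F (Option F × Option F → F) := Submodule.span F
      {w | ∃ c : Fin (a + 1) × Fin (b + 1) → F, w = fun p =>
        ∑ i : Fin (a + 1), ∑ j : Fin (b + 1), c (i, j) *
          ((pt p.1).1 ^ (i : ℕ) * (pt p.1).2 ^ (a - (i : ℕ)) *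
            (pt p.2).1 ^ (j : ℕ) * (pt p.2).2 ^ (b - (j : ℕ)))}
    Fintype.card (Option F × Option F) = (q + 1) ^ 2 ∧
    Module.finrank F C = (a + 1) * (b + 1) ∧
    (∃ c ∈ C, c ≠ 0 ∧ hammingNorm c = (q - a + 1) * (q - b + 1)) ∧
    (∀ c ∈ C, c ≠ 0 → (q - a + 1) * (q - b + 1) ≤ hammingNorm c) := by
  subst hq
  intro pt C
  have hC : C = LinearMap.range (evalBiform a b) := by
    refine (congrArg (Submodule.span F) (Set.ext fun w => ?_)).trans (Submodule.span_eq _)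
    exact exists_congr fun c => eq_comm
  rw [← Nat.sub_add_comm ha.le, ← Nat.sub_add_comm hb.le]
  refine ⟨by simp [sq], ?_, ?_, ?_⟩
  · rw [hC, LinearMap.finrank_range_of_inj (evalBiform_injective ha.le hb.le)]
    simp
  · obtain ⟨c, hc⟩ := exists_hammingNorm_evalBiform_eq ha.le hb.le
    refine ⟨_, hC ▸ LinearMap.mem_range_self _ c, hammingNorm_ne_zero_iff.mp ?_, hc⟩
    rw [hc]
    exact Nat.mul_ne_zero (by omega) (by omega)
  · rintro _ hw hw0
    obtain ⟨c, rfl⟩ := hC ▸ hw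
    exact card_sub_mul_card_sub_le_hammingNorm_evalBiform (by rintro rfl; exact hw0 (map_zero _))
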